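/- arXiv:1810.01676 — 6 statements merged into one kernel-verified Lean document; each statement's English description precedes it below -/
import Mathlib

section
/- For every real p ≥ 1 and every ε with 0 ≤ ε ≤ 1/p, we have (1-ε)^p ≤ 1 - p·ε·(1 - 1/e). -/
theorem stmt_2 (p ε : ℝ) (hp : 1 ≤ p) (h0 : 0 ≤ ε) (h1 : ε ≤ 1 / p) :
    (1 - ε) ^ p ≤ 1 - p * ε * (1 - 1 / Real.exp 1) := by
  have hppos : (0:ℝ) < p := by linarith
  have hε1 : ε ≤ 1 := h1.trans (by rw [div_le_one hppos]; exact hp)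
  have hb : (0:ℝ) ≤ 1 - ε := by linarith
  have h2 : (1 - ε) ^ p ≤ Real.exp (-ε) ^ p :=
    Real.rpow_le_rpow hb (by linarith [Real.add_one_le_exp (-ε)]) hppos.le
  have h3 : Real.exp (-ε) ^ p = Real.exp (-(p * ε)) := by
    rw [← Real.exp_one_rpow (-ε), ← Real.rpow_mul (Real.exp_pos 1).le,
      Real.exp_one_rpow]
    ring_nf
  set t := p * ε with ht
  have ht0 : 0 ≤ t := mul_nonneg hppos.le h0
  have ht1 : t ≤ 1 := by
    have := (le_div_iff₀ hppos).mp h1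
    linarith [this]
  have hconv := convexOn_exp.2 (Set.mem_univ (-1:ℝ)) (Set.mem_univ (0:ℝ))
    ht0 (by linarith : (0:ℝ) ≤ 1 - t) (by ring)
  simp only [smul_eq_mul, mul_zero, mul_neg_one, add_zero, Real.exp_zero] at hconv
  have hinv : Real.exp (-1) = 1 / Real.exp 1 := by
    rw [Real.exp_neg, one_div]
  have : Real.exp (-t) ≤ 1 - t * (1 - 1 / Real.exp 1) := by
    rw [← hinv]
    calc Real.exp (-t) ≤ t * Real.exp (-1) + (1 - t) * 1 := by
          convert hconv using 2
      _ = 1 - t * (1 - Real.exp (-1)) := by ring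
  calc (1 - ε) ^ p ≤ Real.exp (-t) := by rw [← h3]; exact h2
    _ ≤ 1 - t * (1 - 1 / Real.exp 1) := this
end

section
/- For every real p with 0 ≤ p ≤ 1 and all reals a, b with a ≥ 2b ≥ 0, we have a^p - (a-b)^p ≤ 2·p·a^(p-1)·b·ln 2. -/
theorem stmt_7 (p a b : ℝ) (hp0 : 0 ≤ p) (hp1 : p ≤ 1) (hab : a ≥ 2 * b) (hb : 2 * b ≥ 0) :
    a ^ p - (a - b) ^ p ≤ 2 * p * a ^ (p - 1) * b * Real.log 2 := by
  have hb0 : 0 ≤ b := by linarith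
  rcases eq_or_lt_of_le hb0 with hb' | hb'
  · simp [← hb']
  -- now 0 < b, hence 0 < a
  have ha : 0 < a := by linarith
  set t : ℝ := b / a with ht_def
  have ht0 : 0 < t := div_pos hb' ha
  have ht2 : t ≤ 1 / 2 := by
    rw [div_le_iff₀ ha]; linarith
  have h1t : 0 < 1 - t := by linarith
  -- log lower bound: -2 * log 2 * t ≤ log (1 - t), via convexity of exp
  have hconv : Real.exp (-(2 * Real.log 2 * t)) ≤ 1 - t := by
    have h := convexOn_exp.2 (Set.mem_univ (-Real.log 2)) (Set.mem_univ 0)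
      (by linarith : (0:ℝ) ≤ 2 * t) (by linarith : (0:ℝ) ≤ 1 - 2 * t) (by ring)
    simp only [smul_eq_mul, mul_zero, add_zero, Real.exp_zero] at h
    have he : Real.exp (-Real.log 2) = 1 / 2 := by
      rw [Real.exp_neg, Real.exp_log (by norm_num : (0:ℝ) < 2)]; norm_num
    rw [he] at h
    calc Real.exp (-(2 * Real.log 2 * t)) = Real.exp (2 * t * -Real.log 2) := by ring_nf
      _ ≤ 2 * t * (1/2) + (1 - 2 * t) * 1 := h
      _ = 1 - t := by ring
  have hlog : -Real.log (1 - t) ≤ 2 * Real.log 2 * t := by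
    have := Real.log_le_log (Real.exp_pos _) hconv
    rw [Real.log_exp] at this
    linarith
  -- key pointwise bound
  have hkey : 1 - (1 - t) ^ p ≤ p * (2 * Real.log 2 * t) := by
    have hrw : (1 - t) ^ p = Real.exp (Real.log (1 - t) * p) :=
      Real.rpow_def_of_pos h1t p
    have h1 : p * Real.log (1 - t) + 1 ≤ Real.exp (Real.log (1 - t) * p) :=
      by linarith [Real.add_one_le_exp (Real.log (1 - t) * p)]
    have h2 : p * (-Real.log (1 - t)) ≤ p * (2 * Real.log 2 * t) :=
      mul_le_mul_of_nonneg_left hlog hp0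
    rw [hrw]; linarith
  -- assemble
  have hfact : a - b = a * (1 - t) := by
    rw [ht_def]; field_simp
  have hsplit : (a - b) ^ p = a ^ p * (1 - t) ^ p := by
    rw [hfact, Real.mul_rpow ha.le h1t.le]
  have hap : 0 ≤ a ^ p := Real.rpow_nonneg ha.le p
  have hmul : a ^ p * (1 - (1 - t) ^ p) ≤ a ^ p * (p * (2 * Real.log 2 * t)) :=
    mul_le_mul_of_nonneg_left hkey hap
  have hpow : a ^ p * t = a ^ (p - 1) * b := by
    rw [Real.rpow_sub ha, Real.rpow_one, ht_def]
    field_simp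
  calc a ^ p - (a - b) ^ p = a ^ p * (1 - (1 - t) ^ p) := by rw [hsplit]; ring
    _ ≤ a ^ p * (p * (2 * Real.log 2 * t)) := hmul
    _ = 2 * p * (a ^ p * t) * Real.log 2 := by ring
    _ = 2 * p * a ^ (p - 1) * b * Real.log 2 := by rw [hpow]; ring
end

section
/- Let p ≥ 0 be a real number, i an integer, and for a real t define t^(i) = ⌊t/2^i⌋·2^i. Define G_i(x,y) = (max(0, |x^(i) - y^(i)| - 2^i))^p and g_i = G_i - G_{i+1}. If |x - y| ≤ 2^i, then g_i(x,y) = 0. -/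
lemma floor_scale_close (k : ℤ) (x y : ℝ) (h : |x - y| ≤ 2 ^ k) :
    max 0 (|(⌊x / 2 ^ k⌋ : ℝ) * 2 ^ k - (⌊y / 2 ^ k⌋ : ℝ) * 2 ^ k| - 2 ^ k) = 0 := by
  have ht : (0:ℝ) < 2 ^ k := zpow_pos (by norm_num) k
  have hd : |x / 2 ^ k - y / 2 ^ k| ≤ 1 := by
    rw [div_sub_div_same, abs_div, abs_of_pos ht, div_le_one ht]
    exact h
  have h1 : |(⌊x / 2 ^ k⌋ : ℤ) - ⌊y / 2 ^ k⌋| ≤ 1 := by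
    rw [abs_le] at hd ⊢
    constructor
    · have := Int.floor_le (y / 2 ^ k)
      have := Int.lt_floor_add_one (x / 2 ^ k)
      have : (⌊y / 2 ^ k⌋ : ℝ) - ⌊x / 2 ^ k⌋ < 2 := by linarith
      have : (⌊y / 2 ^ k⌋ : ℤ) - ⌊x / 2 ^ k⌋ < 2 := by exact_mod_cast this
      omega
    · have := Int.floor_le (x / 2 ^ k)
      have := Int.lt_floor_add_one (y / 2 ^ k)
      have : (⌊x / 2 ^ k⌋ : ℝ) - ⌊y / 2 ^ k⌋ < 2 := by linarith
      have : (⌊x / 2 ^ k⌋ : ℤ) - ⌊y / 2 ^ k⌋ < 2 := by exact_mod_cast this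
      omega
  have h1' : |(⌊x / 2 ^ k⌋ : ℝ) - ⌊y / 2 ^ k⌋| ≤ 1 := by exact_mod_cast h1
  rw [← sub_mul, abs_mul, abs_of_pos ht]
  have : |(⌊x / 2 ^ k⌋ : ℝ) - ⌊y / 2 ^ k⌋| * 2 ^ k ≤ 2 ^ k := by
    nlinarith
  exact max_eq_left (by linarith)

theorem stmt_9 (p : ℝ) (hp : 0 ≤ p) (i : ℤ) (x y : ℝ)
    (G : ℤ → ℝ → ℝ → ℝ)
    (hG : ∀ k : ℤ, ∀ a b : ℝ,
      G k a b =
        (max 0 (|(⌊a / 2 ^ k⌋ : ℝ) * 2 ^ k - (⌊b / 2 ^ k⌋ : ℝ) * 2 ^ k| - 2 ^ k)) ^ p)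
    (h : |x - y| ≤ 2 ^ i) :
    G i x y - G (i + 1) x y = 0 := by
  have h2 : |x - y| ≤ 2 ^ (i + 1) := by
    refine h.trans ?_
    exact zpow_le_zpow_right₀ (by norm_num) (by omega)
  rw [hG, hG, floor_scale_close i x y h, floor_scale_close (i+1) x y h2, sub_self]
end

section
/- Let p ≥ 1 be real, x, y reals, i an integer. Define t^(i) = ⌊t/2^i⌋·2^i, G_i(x,y) = (max(0, |x^(i) - y^(i)| - 2^i))^p and g_i = G_i - G_{i+1}. Then |g_i(x,y)| ≤ 2·p·2^i·|x - y|^(p-1) whenever x ≠ y. -/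
/-!
Write `δ = 2^i` and let `u`, `v` be the bases of `G_i` and `G_{i+1}`. Rounding down moves each
point by less than the step, so `u, v ≤ |x - y|`; and the `δ`-grid point below `t` lies within `δ`
above the `2δ`-grid point below `t`, so `|u - v| ≤ 2δ`. The mean value theorem for `s ↦ s^p` on
`[0, |x - y|]` then gives `|u^p - v^p| ≤ p |x - y|^(p-1) · 2δ`.
-/

open Set

/-- The paper's `t^(i)` for the step `δ = 2^i`. -/
noncomputable def gridFloor (δ t : ℝ) : ℝ := ⌊t / δ⌋ * δ

/-- The base of the paper's `G_i` for the step `δ = 2^i`. -/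
noncomputable def gridDist (δ x y : ℝ) : ℝ := max 0 (|gridFloor δ x - gridFloor δ y| - δ)

section GridFloor

variable {δ : ℝ}

theorem gridFloor_le (hδ : 0 < δ) (t : ℝ) : gridFloor δ t ≤ t :=
  (le_div_iff₀ hδ).1 (Int.floor_le (t / δ))

theorem lt_gridFloor_add (hδ : 0 < δ) (t : ℝ) : t < gridFloor δ t + δ := by
  have h := (div_lt_iff₀ hδ).1 (Int.lt_floor_add_one (t / δ))
  rw [gridFloor]
  linarith

theorem gridFloor_sub_gridFloor_mul_two_mem_Icc (hδ : 0 ≤ δ) (t : ℝ) :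
    gridFloor δ t - gridFloor (δ * 2) t ∈ Icc 0 δ := by
  have hfloor : ⌊t / (δ * 2)⌋ = ⌊t / δ⌋ / 2 := by
    rw [← div_div]
    exact_mod_cast Int.floor_div_natCast (t / δ) 2
  have hrem : gridFloor δ t - gridFloor (δ * 2) t = ((⌊t / δ⌋ % 2 : ℤ) : ℝ) * δ := by
    rw [gridFloor, gridFloor, hfloor, Int.emod_def]
    push_cast
    ring
  have h0 : (0 : ℝ) ≤ ((⌊t / δ⌋ % 2 : ℤ) : ℝ) := by exact_mod_cast Int.emod_nonneg _ two_ne_zero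
  have h1 : ((⌊t / δ⌋ % 2 : ℤ) : ℝ) ≤ 1 := by
    exact_mod_cast Int.lt_add_one_iff.1 (Int.emod_lt_of_pos _ two_pos)
  rw [hrem]
  exact ⟨mul_nonneg h0 hδ, mul_le_of_le_one_left hδ h1⟩

end GridFloor

section GridDist

variable {δ : ℝ}

theorem gridDist_nonneg (δ x y : ℝ) : 0 ≤ gridDist δ x y := le_max_left _ _

theorem gridDist_le_abs_sub (hδ : 0 < δ) (x y : ℝ) : gridDist δ x y ≤ |x - y| := by
  refine max_le (abs_nonneg _) ?_
  have hx := gridFloor_le hδ x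
  have hx' := lt_gridFloor_add hδ x
  have hy := gridFloor_le hδ y
  have hy' := lt_gridFloor_add hδ y
  have h : |gridFloor δ x - gridFloor δ y| ≤ |x - y| + δ := by
    rw [abs_le]
    constructor <;> cases abs_cases (x - y) <;> linarith
  linarith

theorem abs_gridDist_sub_gridDist_mul_two_le (hδ : 0 ≤ δ) (x y : ℝ) :
    |gridDist δ x y - gridDist (δ * 2) x y| ≤ 2 * δ := by
  obtain ⟨hx₀, hx₁⟩ := gridFloor_sub_gridFloor_mul_two_mem_Icc hδ x
  obtain ⟨hy₀, hy₁⟩ := gridFloor_sub_gridFloor_mul_two_mem_Icc hδ y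
  have hshift : |(gridFloor δ x - gridFloor δ y) - (gridFloor (δ * 2) x - gridFloor (δ * 2) y)|
      ≤ δ := by
    rw [abs_le]
    constructor <;> linarith
  have hgap := abs_le.1 ((abs_abs_sub_abs_le_abs_sub _ _).trans hshift)
  calc |gridDist δ x y - gridDist (δ * 2) x y|
      ≤ |(|gridFloor δ x - gridFloor δ y| - δ)
          - (|gridFloor (δ * 2) x - gridFloor (δ * 2) y| - δ * 2)| := by
        simpa only [gridDist, max_comm (0 : ℝ)] using abs_max_sub_max_le_abs _ _ 0
    _ ≤ 2 * δ := by
        rw [abs_le]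
        constructor <;> linarith [hgap.1, hgap.2]

end GridDist

theorem abs_rpow_sub_rpow_le_of_mem_Icc {p M u v : ℝ} (hp : 1 ≤ p) (hu : u ∈ Icc 0 M)
    (hv : v ∈ Icc 0 M) : |u ^ p - v ^ p| ≤ p * M ^ (p - 1) * |u - v| := by
  have hderiv : ∀ s ∈ Icc 0 M,
      HasDerivWithinAt (fun s : ℝ => s ^ p) (p * s ^ (p - 1)) (Icc 0 M) s :=
    fun s _ => (Real.hasDerivAt_rpow_const (Or.inr hp)).hasDerivWithinAt
  have hbound : ∀ s ∈ Icc 0 M, ‖p * s ^ (p - 1)‖ ≤ p * M ^ (p - 1) := by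
    rintro s ⟨hs₀, hsM⟩
    rw [Real.norm_eq_abs, abs_of_nonneg (by positivity)]
    gcongr
  simpa only [Real.norm_eq_abs] using
    (convex_Icc 0 M).norm_image_sub_le_of_norm_hasDerivWithin_le hderiv hbound hv hu

theorem stmt_12_general (p : ℝ) (hp : 1 ≤ p) (x y : ℝ) (i : ℤ)
    (G : ℤ → ℝ → ℝ → ℝ)
    (hG : ∀ k : ℤ, ∀ a b : ℝ,
      G k a b =
        (max 0 (|(⌊a / 2 ^ k⌋ : ℝ) * 2 ^ k - (⌊b / 2 ^ k⌋ : ℝ) * 2 ^ k| - 2 ^ k)) ^ p) :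
    |G i x y - G (i + 1) x y| ≤ 2 * p * 2 ^ i * |x - y| ^ (p - 1) := by
  have hδ : (0 : ℝ) < 2 ^ i := zpow_pos two_pos i
  have hGi : G i x y = gridDist (2 ^ i) x y ^ p := hG i x y
  have hGi' : G (i + 1) x y = gridDist (2 ^ i * 2) x y ^ p := by
    rw [← zpow_add_one₀ two_ne_zero]
    exact hG (i + 1) x y
  have hmem : ∀ δ : ℝ, 0 < δ → gridDist δ x y ∈ Icc 0 |x - y| :=
    fun δ hδ => ⟨gridDist_nonneg δ x y, gridDist_le_abs_sub hδ x y⟩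
  rw [hGi, hGi']
  calc |gridDist (2 ^ i) x y ^ p - gridDist (2 ^ i * 2) x y ^ p|
      ≤ p * |x - y| ^ (p - 1) * |gridDist (2 ^ i) x y - gridDist (2 ^ i * 2) x y| :=
        abs_rpow_sub_rpow_le_of_mem_Icc hp (hmem _ hδ) (hmem _ (by positivity))
    _ ≤ p * |x - y| ^ (p - 1) * (2 * 2 ^ i) := by
        gcongr
        exact abs_gridDist_sub_gridDist_mul_two_le hδ.le x y
    _ = 2 * p * 2 ^ i * |x - y| ^ (p - 1) := by ring

theorem stmt_12 (p : ℝ) (hp : 1 ≤ p) (x y : ℝ) (i : ℤ)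
    (G : ℤ → ℝ → ℝ → ℝ)
    (hG : ∀ k : ℤ, ∀ a b : ℝ,
      G k a b =
        (max 0 (|(⌊a / 2 ^ k⌋ : ℝ) * 2 ^ k - (⌊b / 2 ^ k⌋ : ℝ) * 2 ^ k| - 2 ^ k)) ^ p)
    (hxy : x ≠ y) :
    |G i x y - G (i + 1) x y| ≤ 2 * p * 2 ^ i * |x - y| ^ (p - 1) :=
  stmt_12_general p hp x y i G hG
end

section
/- Let x, y be reals and i an integer with t^(i) = ⌊t/2^i⌋·2^i. Setting A = |x^(i) - y^(i)| and B = |x^(i+1) - y^(i+1)|, A' = max(0, A - 2^i), B' = max(0, B - 2^(i+1)), we have |A' - B'| ≤ 2·2^i, and |x-y| - 2·2^i ≤ A' ≤ |x-y|, and |x-y| - 2·2^(i+1) ≤ B' ≤ |x-y|. -/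
lemma err_bounds (x : ℝ) (i : ℤ) :
    0 ≤ x - (⌊x / 2 ^ i⌋ : ℝ) * 2 ^ i ∧ x - (⌊x / 2 ^ i⌋ : ℝ) * 2 ^ i < 2 ^ i :=
  ⟨Int.sub_floor_div_mul_nonneg x (zpow_pos two_pos i),
   Int.sub_floor_div_mul_lt x (zpow_pos two_pos i)⟩

lemma step_bounds (x : ℝ) (i : ℤ) :
    0 ≤ (⌊x / 2 ^ i⌋ : ℝ) * 2 ^ i - (⌊x / 2 ^ (i + 1)⌋ : ℝ) * 2 ^ (i + 1) ∧
    (⌊x / 2 ^ i⌋ : ℝ) * 2 ^ i - (⌊x / 2 ^ (i + 1)⌋ : ℝ) * 2 ^ (i + 1) ≤ 2 ^ i := by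
  have hc : (0:ℝ) < 2 ^ i := zpow_pos two_pos i
  have h2 : (2:ℝ) ^ (i+1) = 2 * 2 ^ i := by rw [zpow_add_one₀ (two_ne_zero), mul_comm]
  set m := ⌊x / 2 ^ (i+1)⌋ with hm
  set n := ⌊x / 2 ^ i⌋ with hn
  have hml : (m:ℝ) * (2 * 2 ^ i) ≤ x := by
    calc (m:ℝ) * (2 * 2^i) = (m:ℝ) * 2^(i+1) := by rw [h2]
    _ ≤ x := by
        have h := Int.floor_le (x / 2 ^ (i+1))
        rw [← hm] at h
        calc (m:ℝ) * 2^(i+1) ≤ x / 2^(i+1) * 2^(i+1) := by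
              apply mul_le_mul_of_nonneg_right h (by positivity)
        _ = x := by field_simp
  have hmu : x < ((m:ℝ) + 1) * (2 * 2 ^ i) := by
    have h := Int.lt_floor_add_one (x / 2 ^ (i+1))
    rw [← hm] at h
    calc x = x / 2 ^ (i+1) * 2 ^ (i+1) := by field_simp
    _ < ((m:ℝ)+1) * 2 ^ (i+1) := mul_lt_mul_of_pos_right h (by rw [h2]; positivity)
    _ = ((m:ℝ)+1) * (2 * 2^i) := by rw [h2]
  have h1 : (2*m : ℤ) ≤ n := by
    rw [hn]
    apply Int.le_floor.2
    rw [le_div_iff₀ hc]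
    push_cast
    nlinarith
  have h2' : n < 2*m + 2 := by
    rw [hn]
    apply Int.floor_lt.2
    rw [div_lt_iff₀ hc]
    push_cast
    nlinarith
  have h1' : (2*(m:ℝ)) ≤ (n:ℝ) := by exact_mod_cast h1
  have h2'' : (n:ℝ) ≤ 2*(m:ℝ) + 1 := by
    have : n ≤ 2*m + 1 := by omega
    exact_mod_cast this
  constructor <;> rw [h2] <;> nlinarith

theorem stmt_13 (x y : ℝ) (i : ℤ)
    (A B A' B' : ℝ)
    (hA : A = |(⌊x / 2 ^ i⌋ : ℝ) * 2 ^ i - (⌊y / 2 ^ i⌋ : ℝ) * 2 ^ i|)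
    (hB : B = |(⌊x / 2 ^ (i + 1)⌋ : ℝ) * 2 ^ (i + 1) - (⌊y / 2 ^ (i + 1)⌋ : ℝ) * 2 ^ (i + 1)|)
    (hA' : A' = max 0 (A - 2 ^ i)) (hB' : B' = max 0 (B - 2 ^ (i + 1))) :
    |A' - B'| ≤ 2 * 2 ^ i ∧
    (|x - y| - 2 * 2 ^ i ≤ A' ∧ A' ≤ |x - y|) ∧
    (|x - y| - 2 * 2 ^ (i + 1) ≤ B' ∧ B' ≤ |x - y|) := by
  have hc : (0:ℝ) < 2 ^ i := zpow_pos two_pos i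
  have h2 : (2:ℝ) ^ (i+1) = 2 * 2 ^ i := by rw [zpow_add_one₀ (two_ne_zero), mul_comm]
  obtain ⟨hex0, hex1⟩ := err_bounds x i
  obtain ⟨hey0, hey1⟩ := err_bounds y i
  obtain ⟨heX0, heX1⟩ := err_bounds x (i+1)
  obtain ⟨heY0, heY1⟩ := err_bounds y (i+1)
  obtain ⟨hdx0, hdx1⟩ := step_bounds x i
  obtain ⟨hdy0, hdy1⟩ := step_bounds y i
  set Xi := (⌊x / 2 ^ i⌋ : ℝ) * 2 ^ i
  set Yi := (⌊y / 2 ^ i⌋ : ℝ) * 2 ^ i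
  set X1 := (⌊x / 2 ^ (i+1)⌋ : ℝ) * 2 ^ (i+1)
  set Y1 := (⌊y / 2 ^ (i+1)⌋ : ℝ) * 2 ^ (i+1)
  -- A close to |x - y|
  have hAxy : abs (A - |x - y|) ≤ 2 ^ i := by
    rw [hA]
    refine (abs_abs_sub_abs_le_abs_sub _ _).trans ?_
    rw [show Xi - Yi - (x - y) = (y - Yi) - (x - Xi) by ring, abs_le]
    constructor <;> linarith
  have hBxy : abs (B - |x - y|) ≤ 2 ^ (i+1) := by
    rw [hB]
    refine (abs_abs_sub_abs_le_abs_sub _ _).trans ?_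
    rw [show X1 - Y1 - (x - y) = (y - Y1) - (x - X1) by ring, abs_le]
    constructor <;> linarith
  have hABd : |A - B| ≤ 2 ^ i := by
    rw [hA, hB]
    refine (abs_abs_sub_abs_le_abs_sub _ _).trans ?_
    rw [show Xi - Yi - (X1 - Y1) = (Xi - X1) - (Yi - Y1) by ring, abs_le]
    constructor <;> linarith
  rw [abs_le] at hAxy hBxy hABd
  have habs : 0 ≤ |x - y| := abs_nonneg _
  rcases max_cases 0 (A - 2 ^ i) with ⟨hA1, hA2⟩ | ⟨hA1, hA2⟩ <;>
    rcases max_cases 0 (B - 2 ^ (i+1)) with ⟨hB1, hB2⟩ | ⟨hB1, hB2⟩ <;>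
      rw [hA1] at hA' <;> rw [hB1] at hB' <;>
        refine ⟨abs_le.2 ⟨by linarith, by linarith⟩, ⟨by linarith, by linarith⟩, by linarith, by linarith⟩
end

section
/- Let 0 < p ≤ 1 and let A' ≥ B' ≥ 0 be reals with A' - B' ≤ 2·2^i and max(A', B') ≤ M for some real M ≥ 6·2^i (i an integer). Then A'^p - B'^p ≤ 6·p·(ln 2)·M^(p-1)·2^i provided B' ≥ M - 3·2^i and A' ≤ M. -/
open Real in
lemma rpow_sub_rpow_le_aux {p b a : ℝ} (hp0 : 0 < p) (hp1 : p ≤ 1)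
    (hb : 0 < b) (hab : b ≤ a) :
    a ^ p - b ^ p ≤ p * b ^ (p - 1) * (a - b) := by
  rcases eq_or_lt_of_le hab with rfl | hlt
  · simp
  have hcont : ContinuousOn (fun x : ℝ => x ^ p) (Set.Icc b a) := by
    intro x hx
    exact (Real.continuousAt_rpow_const x p (Or.inl (lt_of_lt_of_le hb hx.1).ne')).continuousWithinAt
  have hderiv : ∀ x ∈ Set.Ioo b a,
      HasDerivAt (fun x : ℝ => x ^ p) (p * x ^ (p - 1)) x := by
    intro x hx
    exact Real.hasDerivAt_rpow_const (Or.inl (lt_of_lt_of_le hb hx.1.le).ne')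
  obtain ⟨c, hc, hceq⟩ := exists_hasDerivAt_eq_slope (fun x : ℝ => x ^ p)
    (fun x => p * x ^ (p - 1)) hlt hcont hderiv
  have hc0 : 0 < c := lt_trans hb hc.1
  have hbd : c ^ (p - 1) ≤ b ^ (p - 1) :=
    Real.rpow_le_rpow_of_nonpos hb hc.1.le (by linarith)
  have hane : a - b > 0 := by linarith
  have : a ^ p - b ^ p = p * c ^ (p - 1) * (a - b) := by
    field_simp at hceq
    linarith [hceq]
  rw [this]
  have : p * c ^ (p - 1) ≤ p * b ^ (p - 1) := by
    exact mul_le_mul_of_nonneg_left hbd hp0.le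
  nlinarith

theorem stmt_16 (p : ℝ) (hp0 : 0 < p) (hp1 : p ≤ 1) (i : ℤ) (A' B' M : ℝ)
    (hB'0 : 0 ≤ B') (hAB : B' ≤ A') (hdiff : A' - B' ≤ 2 * 2 ^ i)
    (hM : max A' B' ≤ M) (hM6 : 6 * 2 ^ i ≤ M)
    (hBlow : B' ≥ M - 3 * 2 ^ i) (hAhigh : A' ≤ M) :
    A' ^ p - B' ^ p ≤ 6 * p * Real.log 2 * M ^ (p - 1) * 2 ^ i := by
  have h2i : (0:ℝ) < 2 ^ i := zpow_pos (by norm_num) i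
  have hMpos : 0 < M := by linarith
  have hBpos : 0 < B' := by linarith
  have hBM : M / 2 ≤ B' := by linarith
  have key := rpow_sub_rpow_le_aux hp0 hp1 hBpos hAB
  have hBpow : B' ^ (p - 1) ≤ (M / 2) ^ (p - 1) :=
    Real.rpow_le_rpow_of_nonpos (by linarith) hBM (by linarith)
  have hsplit : (M / 2 : ℝ) ^ (p - 1) = M ^ (p - 1) * (2:ℝ) ^ (1 - p) := by
    rw [div_eq_mul_inv, Real.mul_rpow hMpos.le (by positivity),
      ← Real.rpow_neg_one (2:ℝ), ← Real.rpow_mul (by norm_num)]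
    congr 1
    ring
  have h2pow : (2:ℝ) ^ (1 - p) ≤ 2 := by
    calc (2:ℝ) ^ (1 - p) ≤ (2:ℝ) ^ (1:ℝ) :=
          Real.rpow_le_rpow_of_exponent_le (by norm_num) (by linarith)
      _ = 2 := Real.rpow_one 2
  have hMp : 0 < M ^ (p - 1) := Real.rpow_pos_of_pos hMpos _
  have hBb : B' ^ (p - 1) ≤ 2 * M ^ (p - 1) := by
    calc B' ^ (p - 1) ≤ (M / 2) ^ (p - 1) := hBpow
      _ = M ^ (p - 1) * (2:ℝ) ^ (1 - p) := hsplit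
      _ ≤ M ^ (p - 1) * 2 := by nlinarith
      _ = 2 * M ^ (p - 1) := by ring
  have hlog : (4:ℝ) ≤ 6 * Real.log 2 := by
    have := Real.log_two_gt_d9
    linarith
  have hABpos : 0 ≤ A' - B' := by linarith
  calc A' ^ p - B' ^ p ≤ p * B' ^ (p - 1) * (A' - B') := key
    _ ≤ p * (2 * M ^ (p - 1)) * (2 * 2 ^ i) := by
        apply mul_le_mul
        · exact mul_le_mul_of_nonneg_left hBb hp0.le
        · exact hdiff
        · exact hABpos
        · positivity
    _ = 4 * p * M ^ (p - 1) * 2 ^ i := by ring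
    _ ≤ 6 * p * Real.log 2 * M ^ (p - 1) * 2 ^ i := by
        have h0 : 0 ≤ (6 * Real.log 2 - 4) * (p * (M ^ (p - 1) * 2 ^ i)) :=
          mul_nonneg (by linarith) (by positivity)
        nlinarith [h0]
end
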